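/- arXiv:1608.04633 — 3 statements merged into one kernel-verified Lean document; each statement's English description precedes it below -/
import Mathlib

section
/- Define A(μ) = A→(μ) + A↛(μ) where A→(1) = 1, A↛(1) = 2, A→(μ) = A→(μ-1) + A↛(μ-1), A↛(μ) = A→(μ) + A↛(μ-1). Then A(μ) = F(2μ+2) for all μ ≥ 1. -/
/-!
The two counts interleave the Fibonacci numbers: `At μ = F(2μ)` and `An μ = F(2μ+1)`, since each
recurrence step is one application of `F(k+2) = F(k) + F(k+1)`. Hence `A μ = F(2μ) + F(2μ+1) = F(2μ+2)`.
-/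

theorem fib_interleave_of_mutual_recurrence (a b : ℕ → ℕ) (ha₁ : a 1 = 1) (hb₁ : b 1 = 2)
    (ha : ∀ n, 1 ≤ n → a (n + 1) = a n + b n) (hb : ∀ n, 1 ≤ n → b (n + 1) = a (n + 1) + b n) :
    ∀ n, 1 ≤ n → a n = Nat.fib (2 * n) ∧ b n = Nat.fib (2 * n + 1) := by
  intro n hn
  induction n, hn using Nat.le_induction with
  | base => exact ⟨ha₁, hb₁⟩
  | succ n hn ih =>
    rw [show 2 * (n + 1) = 2 * n + 2 by ring]
    have ha' : a (n + 1) = Nat.fib (2 * n + 2) := by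
      rw [ha n hn, ih.1, ih.2, Nat.fib_add_two]
    refine ⟨ha', ?_⟩
    rw [hb n hn, ha', ih.2, add_comm]
    exact (Nat.fib_add_two (n := 2 * n + 1)).symm

/-- with `At, An` as in the mutual recursion
(`At 1 = 1`, `An 1 = 2`, `At μ = At (μ-1) + An (μ-1)`, `An μ = At μ + An (μ-1)`),
the total `A μ = At μ + An μ` equals `F (2μ+2)` for all `μ ≥ 1`. -/
theorem stmt1 (At An A : ℕ → ℕ)
    (hAt1 : At 1 = 1) (hAn1 : An 1 = 2)
    (hAt : ∀ μ, 2 ≤ μ → At μ = At (μ - 1) + An (μ - 1))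
    (hAn : ∀ μ, 2 ≤ μ → An μ = At μ + An (μ - 1))
    (hA : ∀ μ, A μ = At μ + An μ) :
    ∀ μ, 1 ≤ μ → A μ = Nat.fib (2 * μ + 2) := by
  intro μ hμ
  obtain ⟨hAtμ, hAnμ⟩ := fib_interleave_of_mutual_recurrence At An hAt1 hAn1
    (fun n hn => hAt (n + 1) (by omega)) (fun n hn => hAn (n + 1) (by omega)) μ hμ
  rw [hA, hAtμ, hAnμ, Nat.fib_add_two]
end

section
/- Let N be a positive integer and suppose a probability distribution on (b′, α′, r) ∈ {0,1}^N × A^N × {0,1}^N (conditioned on fixed (α, f)) has the product form Pr(b′, α′, r) = 2^{-N} · ∏_{j=1}^N p_j(b′_j | b′_{<j}, α′_{≤j}) · [α′_j = G_j(α_j, f, b′_{<j} ⊕ r_{<j}, r_j)], where each p_j(·|·) is a conditional probability distribution on {0,1} and each G_j, as a function of its last argument r_j ∈ {0,1} with all other arguments fixed, takes each value at most once. Then the marginal over r satisfies Pr(b′, α′) ≤ 2^{-N} for every (b′, α′). -/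
open Finset

/-! Each factor `p_j` is at most one, so it suffices to see that at most one key `r` is
compatible with `(b', α')`. Such an `r` is determined coordinate by coordinate: once
`r_{<j}` is known, the constraint `α'_j = G_j(α_j, f, b'_{<j} ⊕ r_{<j}, r_j)` pins down `r_j`
because `G_j` is injective in its last argument. -/

theorem le_one_of_sum_update_eq_one {ι β : Type*} [DecidableEq ι] [Fintype β]
    {f : (ι → β) → ℝ} (hf : ∀ b, 0 ≤ f b) {b : ι → β} {j : ι}
    (h : ∑ c, f (Function.update b j c) = 1) : f b ≤ 1 := by
  calc f b = f (Function.update b j (b j)) := by rw [Function.update_eq_self]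
    _ ≤ ∑ c, f (Function.update b j c) :=
        single_le_sum (f := fun c => f (Function.update b j c)) (fun c _ => hf _) (mem_univ _)
    _ = 1 := h

theorem eq_of_forall_causal_eq {ι β γ : Type*} [LT ι] [WellFoundedLT ι]
    {F : ι → (ι → β) → β → γ}
    (hdep : ∀ j r₁ r₂, (∀ i < j, r₁ i = r₂ i) → F j r₁ = F j r₂)
    (hinj : ∀ j r, Function.Injective (F j r)) {r₁ r₂ : ι → β}
    (h : ∀ j, F j r₁ (r₁ j) = F j r₂ (r₂ j)) : r₁ = r₂ := by
  funext j
  induction j using WellFoundedLT.induction with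
  | _ j ih => exact hinj j r₂ ((congrFun (hdep j r₁ r₂ ih) (r₁ j)).symm.trans (h j))

theorem sum_prod_ite_le_one {ι σ : Type*} [Fintype ι] [Fintype σ] {P : ι → σ → Prop}
    [∀ j r, Decidable (P j r)]
    (huniq : ∀ r₁ r₂, (∀ j, P j r₁) → (∀ j, P j r₂) → r₁ = r₂) :
    ∑ r, ∏ j, (if P j r then (1 : ℝ) else 0) ≤ 1 := by
  simp only [prod_boole, mem_univ, true_implies, sum_boole, Nat.cast_le_one]
  exact card_le_one.2 fun r₁ hr₁ r₂ hr₂ => huniq r₁ r₂ (mem_filter.1 hr₁).2 (mem_filter.1 hr₂).2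

/-- `q j b' α'` is `p_j(b'_j | b'_{<j}, α'_{≤j})` and `G j (α j) c r_j` is
`G_j(α_j, f, c_{<j}, r_j)`, with the dependence on `f` absorbed and `c = b' ⊕ r`. -/
theorem stmt9_general (N : ℕ) (A : Type*) [DecidableEq A]
    (q : Fin N → (Fin N → ZMod 2) → (Fin N → A) → ℝ)
    (hq_nonneg : ∀ j b a, 0 ≤ q j b a)
    (hq_prob : ∀ j : Fin N, ∀ b : Fin N → ZMod 2, ∀ a : Fin N → A,
      ∑ c : ZMod 2, q j (Function.update b j c) a = 1)
    (G : Fin N → A → (Fin N → ZMod 2) → ZMod 2 → A)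
    (hG_dep : ∀ j : Fin N, ∀ αj : A, ∀ c₁ c₂ : Fin N → ZMod 2,
      (∀ i, i < j → c₁ i = c₂ i) → G j αj c₁ = G j αj c₂)
    (hG_inj : ∀ j : Fin N, ∀ αj : A, ∀ c : Fin N → ZMod 2,
      Function.Injective (G j αj c))
    (α : Fin N → A) :
    ∀ (b' : Fin N → ZMod 2) (α' : Fin N → A),
      (∑ r : Fin N → ZMod 2, (2 : ℝ) ^ (-(N : ℤ)) *
        ∏ j : Fin N, q j b' α' *
          (if α' j = G j (α j) (fun i => b' i + r i) (r j) then 1 else 0))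
        ≤ (2 : ℝ) ^ (-(N : ℤ)) := by
  intro b' α'
  have hQ_le_one : ∏ j, q j b' α' ≤ 1 :=
    prod_le_one (fun j _ => hq_nonneg _ _ _)
      fun j _ => le_one_of_sum_update_eq_one (hq_nonneg j · α') (hq_prob j b' α')
  have hS_le_one : ∑ r : Fin N → ZMod 2,
      ∏ j, (if α' j = G j (α j) (fun i => b' i + r i) (r j) then (1 : ℝ) else 0) ≤ 1 :=
    sum_prod_ite_le_one fun r₁ r₂ h₁ h₂ =>
      eq_of_forall_causal_eq (F := fun j r => G j (α j) (fun i => b' i + r i))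
        (fun j r₁ r₂ h => hG_dep j (α j) _ _ fun i hi => by rw [h i hi])
        (fun j r => hG_inj j (α j) _) fun j => (h₁ j).symm.trans (h₂ j)
  have hS_nonneg : 0 ≤ ∑ r : Fin N → ZMod 2,
      ∏ j, (if α' j = G j (α j) (fun i => b' i + r i) (r j) then (1 : ℝ) else 0) :=
    sum_nonneg fun r _ => prod_nonneg fun j _ => by positivity
  simp_rw [prod_mul_distrib, ← mul_sum]
  exact mul_le_of_le_one_right (by positivity)
    (mul_le_one₀ hQ_le_one hS_nonneg hS_le_one)

/-- core probability bound: suppose the joint distribution of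
`(b', α', r)`, conditioned on fixed `(α, f)`, has the product form
`Pr(b', α', r) = 2^{-N} · ∏_j p_j(b'_j | b'_{<j}, α'_{≤j}) · [α'_j = G_j(α_j, f, b'_{<j} ⊕ r_{<j}, r_j)]`.
Here `q j b' α'` stands for the conditional probability `p_j(b'_j | b'_{<j}, α'_{≤j})`
(hence `q j` depends only on `b'_i` for `i ≤ j` and `α'_i` for `i ≤ j`, and is a
probability distribution in the bit `b'_j`), and `G j (α j) c r_j` stands for
`G_j(α_j, f, c_{<j}, r_j)` (with the dependence on `f` absorbed and `c = b' ⊕ r`),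
which depends only on `c_i` for `i < j` and takes each value at most once as a
function of `r_j ∈ {0,1}`.  Then the marginal over `r` satisfies
`Pr(b', α') ≤ 2^{-N}` for every `(b', α')`. -/
theorem stmt9 (N : ℕ) (hN : 0 < N) (A : Type*) [Fintype A] [DecidableEq A]
    (q : Fin N → (Fin N → ZMod 2) → (Fin N → A) → ℝ)
    (hq_nonneg : ∀ j b a, 0 ≤ q j b a)
    (hq_dep : ∀ j : Fin N, ∀ b₁ b₂ : Fin N → ZMod 2, ∀ a₁ a₂ : Fin N → A,
      (∀ i, i ≤ j → b₁ i = b₂ i) → (∀ i, i ≤ j → a₁ i = a₂ i) → q j b₁ a₁ = q j b₂ a₂)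
    (hq_prob : ∀ j : Fin N, ∀ b : Fin N → ZMod 2, ∀ a : Fin N → A,
      ∑ c : ZMod 2, q j (Function.update b j c) a = 1)
    (G : Fin N → A → (Fin N → ZMod 2) → ZMod 2 → A)
    (hG_dep : ∀ j : Fin N, ∀ αj : A, ∀ c₁ c₂ : Fin N → ZMod 2,
      (∀ i, i < j → c₁ i = c₂ i) → G j αj c₁ = G j αj c₂)
    (hG_inj : ∀ j : Fin N, ∀ αj : A, ∀ c : Fin N → ZMod 2,
      Function.Injective (G j αj c))
    (α : Fin N → A) :
    ∀ (b' : Fin N → ZMod 2) (α' : Fin N → A),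
      (∑ r : Fin N → ZMod 2, (2 : ℝ) ^ (-(N : ℤ)) *
        ∏ j : Fin N, q j b' α' *
          (if α' j = G j (α j) (fun i => b' i + r i) (r j) then 1 else 0))
        ≤ (2 : ℝ) ^ (-(N : ℤ)) :=
  stmt9_general N A q hq_nonneg hq_prob G hG_dep hG_inj α
end

section
/- Let φ = (1+√5)/2 and let G(n,n) = ∏_{μ=2}^{n} F(2μ)^2 be the flow count for the n×n cluster state. Then lim_{n→∞} log₂ G(n,n) / n² = 2 log₂ φ. -/
/-!
By Binet's formula `F(m) / φ ^ m → 1 / √5`, so the error terms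
`log₂ F(2μ) - (2μ - 1) log₂ φ` form a bounded sequence. As `F(2) = 1` and `∑_{μ=1}^{n} (2μ - 1) = n²`, this gives
`log₂ G(n,n) = 2 n² log₂ φ + O(n)`.
-/

open Finset Filter Real

section

open scoped goldenRatio

theorem tendsto_fib_div_goldenRatio_pow :
    Tendsto (fun n : ℕ => (Nat.fib n : ℝ) / φ ^ n) atTop (nhds (1 / √5)) := by
  have hratio : |ψ / φ| < 1 := by
    rw [abs_div, abs_of_pos goldenRatio_pos, div_lt_one goldenRatio_pos,
      abs_of_neg goldenConj_neg]
    linarith [neg_one_lt_goldenConj, one_lt_goldenRatio]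
  have hbinet (n : ℕ) : (Nat.fib n : ℝ) / φ ^ n = (1 - (ψ / φ) ^ n) / √5 := by
    rw [coe_fib_eq, div_pow ψ φ n, one_sub_div (pow_ne_zero _ goldenRatio_ne_zero),
      div_right_comm]
  simpa [hbinet] using
    ((tendsto_pow_atTop_nhds_zero_of_abs_lt_one hratio).const_sub 1).div_const √5

theorem tendsto_logb_fib_sub_mul_logb_goldenRatio (b : ℝ) :
    Tendsto (fun n : ℕ => logb b (Nat.fib n) - n * logb b φ) atTop
      (nhds (logb b (1 / √5))) := by
  refine ((continuousAt_logb (by positivity)).tendsto.comp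
    tendsto_fib_div_goldenRatio_pow).congr' ?_
  filter_upwards [eventually_ne_atTop 0] with n hn
  have hfib : (Nat.fib n : ℝ) ≠ 0 := mod_cast (Nat.fib_pos.mpr (Nat.pos_of_ne_zero hn)).ne'
  rw [Function.comp_apply, logb_div hfib (pow_ne_zero _ goldenRatio_ne_zero), logb_pow]

theorem isBounded_range_logb_fib_two_mul_sub (b : ℝ) :
    Bornology.IsBounded
      (Set.range fun μ : ℕ => logb b (Nat.fib (2 * μ)) - (2 * μ - 1) * logb b φ) := by
  refine Metric.isBounded_range_of_tendsto _ ((((tendsto_logb_fib_sub_mul_logb_goldenRatio b).comp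
    (tendsto_id.const_mul_atTop' two_pos)).add_const (logb b φ)).congr fun μ => ?_)
  simp only [Function.comp_apply, id, Nat.cast_mul, Nat.cast_ofNat]
  ring

theorem sum_Icc_two_mul_sub_one_eq_sq (n : ℕ) : ∑ i ∈ Icc 1 n, (2 * i - 1 : ℝ) = n ^ 2 := by
  induction n with
  | zero => simp
  | succ n ih =>
    rw [sum_Icc_succ_top (by omega), ih]
    push_cast
    ring

theorem logb_prod_Icc_fib_two_mul_sq (b : ℝ) (n : ℕ) :
    logb b (∏ μ ∈ Icc 2 n, (Nat.fib (2 * μ) : ℝ) ^ 2) = 2 * logb b φ * n ^ 2 +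
      2 * ∑ μ ∈ Icc 1 n, (logb b (Nat.fib (2 * μ)) - (2 * μ - 1) * logb b φ) := by
  have hfib : ∀ μ ∈ Icc 1 n, (Nat.fib (2 * μ) : ℝ) ^ 2 ≠ 0 := fun μ hμ => by
    have : 0 < Nat.fib (2 * μ) := Nat.fib_pos.mpr (by simp at hμ; omega)
    positivity
  rw [prod_subset (Icc_subset_Icc_left one_le_two) fun μ hμ h2 => ?_, logb_prod _ _ hfib,
    ← sum_Icc_two_mul_sub_one_eq_sq, mul_sum, mul_sum, ← sum_add_distrib]
  · refine sum_congr rfl fun μ _ => ?_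
    rw [logb_pow]
    push_cast
    ring
  · obtain rfl : μ = 1 := by simp at hμ h2; omega
    simp

end

theorem tendsto_sum_Icc_div_sq_of_isBounded {u : ℕ → ℝ}
    (hu : Bornology.IsBounded (Set.range u)) :
    Tendsto (fun n : ℕ => (∑ i ∈ Icc 1 n, u i) / (n : ℝ) ^ 2) atTop (nhds 0) := by
  obtain ⟨C, hC⟩ := isBounded_iff_forall_norm_le.mp hu
  refine squeeze_zero_norm' ?_ (tendsto_const_div_atTop_nhds_zero_nat C)
  filter_upwards [eventually_ne_atTop 0] with n hn
  have hsum : ‖∑ i ∈ Icc 1 n, u i‖ ≤ n * C := by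
    simpa using (norm_sum_le _ _).trans
      (sum_le_card_nsmul (Icc 1 n) _ C fun i _ => hC _ (Set.mem_range_self i))
  rw [norm_div, norm_pow, norm_natCast, div_le_iff₀ (by positivity)]
  exact hsum.trans_eq (by field_simp)

/-- with `φ = (1+√5)/2` and `G(n,n) = ∏_{μ=2}^{n} F(2μ)^2` the flow count
for the `n×n` cluster state, `lim_{n→∞} log₂ G(n,n) / n² = 2 log₂ φ`. -/
theorem stmt16 (φ : ℝ) (hφ : φ = (1 + Real.sqrt 5) / 2) :
    Filter.Tendsto
      (fun n : ℕ =>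
        Real.logb 2 (∏ μ ∈ Finset.Icc 2 n, ((Nat.fib (2 * μ) : ℝ)) ^ 2) / (n : ℝ) ^ 2)
      Filter.atTop (nhds (2 * Real.logb 2 φ)) := by
  obtain rfl : φ = goldenRatio := hφ
  have hlim := ((tendsto_sum_Icc_div_sq_of_isBounded
    (isBounded_range_logb_fib_two_mul_sub 2)).const_mul 2).const_add (2 * logb 2 goldenRatio)
  rw [mul_zero, add_zero] at hlim
  refine hlim.congr' ?_
  filter_upwards [eventually_ne_atTop 0] with n hn
  rw [logb_prod_Icc_fib_two_mul_sq]
  field_simp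
end
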